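/- arXiv:2201.00078 — 3 statements merged into one kernel-verified Lean document; each statement's English description precedes it below -/
import Mathlib

section
/- Let G be a finite simple connected cubic graph and S a set of vertices. If the induced subgraph on the complement of S is acyclic, then S is a P3-hull set of G. -/
open SimpleGraph

def infectStep {V : Type*} (G : SimpleGraph V) (S : Set V) : Set V :=
  S ∪ {v | ∃ a b, a ≠ b ∧ a ∈ S ∧ b ∈ S ∧ G.Adj v a ∧ G.Adj v b}

def infectIter {V : Type*} (G : SimpleGraph V) (S : Set V) : ℕ → Set V
  | 0 => S
  | p + 1 => infectStep G (infectIter G S p)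

def IsHullSet {V : Type*} (G : SimpleGraph V) (S : Set V) : Prop :=
  ∃ p, infectIter G S p = Set.univ

noncomputable def hullNumber {V : Type*} (G : SimpleGraph V) : ℕ :=
  sInf {m | ∃ S : Set V, S.ncard = m ∧ IsHullSet G S}

noncomputable def infectTime {V : Type*} (G : SimpleGraph V) (S : Set V) : ℕ :=
  sInf {p | infectIter G S p = Set.univ}

def IsCubic {V : Type*} (G : SimpleGraph V) : Prop :=
  ∀ v, {w | G.Adj v w}.ncard = 3

def IsDecyclingSet {V : Type*} (G : SimpleGraph V) (S : Set V) : Prop :=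
  (G.induce Sᶜ).IsAcyclic

noncomputable def decyclingNumber {V : Type*} (G : SimpleGraph V) : ℕ :=
  sInf {m | ∃ S : Set V, S.ncard = m ∧ IsDecyclingSet G S}

def pHull {V : Type*} (G : SimpleGraph V) (S : Set V) : Set V :=
  ⋃ p, infectIter G S p

noncomputable def graphDiam {V : Type*} (G : SimpleGraph V) : ℕ :=
  sSup {d | ∃ a b, d = G.dist a b}

noncomputable def maxCompDiam {V : Type*} (G : SimpleGraph V) : ℕ :=
  sSup {d | ∃ c : G.ConnectedComponent, d = graphDiam (G.induce c.supp)}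

open Fin.NatCast in
def genPetersen (n k : ℕ) [NeZero n] : SimpleGraph (Fin n ⊕ Fin n) :=
  SimpleGraph.fromRel fun x y =>
    match x, y with
    | Sum.inl i, Sum.inl j => j = i + 1
    | Sum.inl i, Sum.inr j => i = j
    | Sum.inr i, Sum.inr j => j = i + (k : Fin n)
    | _, _ => False

/-!
The infection process started from `S` stabilises at a set `H ⊇ S` that infects nothing new, so
every vertex outside `H` has at most one neighbour in `H` and hence, having degree three, at
least two neighbours outside `H`. If `H ≠ V`, the graph induced on `V ∖ H`, a subgraph of the
forest induced on `V ∖ S`, would be a nonempty finite forest of minimum degree two, which is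
impossible: the end of a longest path in a forest is a leaf.
-/

namespace SimpleGraph

variable {V : Type*} {G : SimpleGraph V}

theorem IsAcyclic.exists_neighborSet_subsingleton [Finite V] [Nonempty V] (h : G.IsAcyclic) :
    ∃ v, (G.neighborSet v).Subsingleton := by
  obtain ⟨u, v, p, hp, hmax⟩ := Walk.exists_isPath_forall_isPath_length_le_length G
  have hpen : ∀ w ∈ G.neighborSet v, w = p.penultimate := by
    intro w (hw : G.Adj v w)
    refine h.eq_penultimate_of_adj_end hp hw ?_
    by_contra hws
    have := hmax _ _ _ (hp.concat hws hw)
    rw [Walk.length_concat] at this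
    omega
  exact ⟨v, fun a ha b hb => (hpen a ha).trans (hpen b hb).symm⟩

end SimpleGraph

open SimpleGraph

section Infection

variable {V : Type*} (G : SimpleGraph V) (S : Set V)

theorem subset_infectStep : S ⊆ infectStep G S :=
  Set.subset_union_left

theorem monotone_infectIter : Monotone (infectIter G S) :=
  monotone_nat_of_le_succ fun p => subset_infectStep G (infectIter G S p)

theorem subset_infectIter (p : ℕ) : S ⊆ infectIter G S p :=
  monotone_infectIter G S (Nat.zero_le p)

theorem exists_infectStep_infectIter_eq [Finite V] :
    ∃ p, infectStep G (infectIter G S p) = infectIter G S p := by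
  obtain ⟨p, hp⟩ := WellFoundedGT.monotone_chain_condition ⟨_, monotone_infectIter G S⟩
  exact ⟨p, (hp (p + 1) p.le_succ).symm⟩

variable {G S}

theorem neighborSet_inter_subsingleton_of_infectStep_eq (hS : infectStep G S = S) {v : V}
    (hv : v ∉ S) : (G.neighborSet v ∩ S).Subsingleton := by
  rintro a ⟨hva, haS⟩ b ⟨hvb, hbS⟩
  by_contra hab
  exact hv (hS ▸ Or.inr ⟨a, b, hab, haS, hbS, hva, hvb⟩)

theorem not_isAcyclic_induce_compl_of_infectStep_eq [Finite V]
    (hdeg : ∀ v, 3 ≤ (G.neighborSet v).ncard) (hS : infectStep G S = S) (hne : Sᶜ.Nonempty) :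
    ¬ (G.induce Sᶜ).IsAcyclic := by
  intro hacyc
  have : Nonempty (Sᶜ : Set V) := hne.to_subtype
  obtain ⟨⟨v, hv⟩, hsub⟩ := hacyc.exists_neighborSet_subsingleton
  have hin := neighborSet_inter_subsingleton_of_infectStep_eq hS hv
  have hout : (G.neighborSet v \ S).Subsingleton := by
    rintro a ⟨hva, haS⟩ b ⟨hvb, hbS⟩
    exact congrArg Subtype.val (@hsub ⟨a, haS⟩ hva ⟨b, hbS⟩ hvb)
  have := calc
    (G.neighborSet v).ncard = (G.neighborSet v ∩ S ∪ G.neighborSet v \ S).ncard := by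
      rw [Set.inter_union_sdiff]
    _ ≤ (G.neighborSet v ∩ S).ncard + (G.neighborSet v \ S).ncard := Set.ncard_union_le _ _
    _ ≤ 1 + 1 := add_le_add (Set.ncard_le_one_iff_subsingleton.mpr hin)
        (Set.ncard_le_one_iff_subsingleton.mpr hout)
  linarith [hdeg v]

end Infection

theorem stmt1_general {V : Type*} [Fintype V] (G : SimpleGraph V)
    (hcub : IsCubic G) (S : Set V)
    (hS : (G.induce Sᶜ).IsAcyclic) : IsHullSet G S := by
  obtain ⟨p, hp⟩ := exists_infectStep_infectIter_eq G S
  have hacyc : (G.induce (infectIter G S p)ᶜ).IsAcyclic :=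
    hS.embedding (G.induceHomOfLE (Set.compl_subset_compl.mpr (subset_infectIter G S p)))
  refine ⟨p, by_contra fun hne => ?_⟩
  exact not_isAcyclic_induce_compl_of_infectStep_eq (fun v => (hcub v).ge) hp
    (Set.nonempty_compl.mpr hne) hacyc

theorem stmt1 {V : Type*} [Fintype V] (G : SimpleGraph V)
    (hcub : IsCubic G) (hconn : G.Connected) (S : Set V)
    (hS : (G.induce Sᶜ).IsAcyclic) : IsHullSet G S :=
  stmt1_general G hcub S hS
end

section
/- If W is a nonempty set of vertices of a cubic graph G inducing a cycle, and S is a set of vertices disjoint from W, then no iterate I^p[S] of the infection process starting at S can ever contain a vertex of W; in particular S is not a P3-hull set. -/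
open SimpleGraph

/-! A vertex of `W` has two neighbours on the cycle and hence, by cubicity, only one neighbour
outside `W`. So as long as the infected set avoids `W`, no vertex of `W` ever sees two infected
neighbours, and by induction the infection never reaches `W`. -/

section Infection

variable {V : Type*} (G : SimpleGraph V) {W : Set V}

theorem disjoint_infectStep (hW : ∀ w ∈ W, {x | G.Adj w x ∧ x ∉ W}.Subsingleton)
    {T : Set V} (hT : Disjoint T W) : Disjoint (infectStep G T) W := by
  refine Set.disjoint_union_left.mpr ⟨hT, Set.disjoint_left.mpr ?_⟩
  rintro v ⟨a, b, hab, ha, hb, hva, hvb⟩ hvW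
  exact hab <| hW v hvW ⟨hva, Set.disjoint_left.mp hT ha⟩ ⟨hvb, Set.disjoint_left.mp hT hb⟩

theorem disjoint_infectIter (hW : ∀ w ∈ W, {x | G.Adj w x ∧ x ∉ W}.Subsingleton)
    {S : Set V} (hS : Disjoint S W) (p : ℕ) : Disjoint (infectIter G S p) W := by
  induction p with
  | zero => exact hS
  | succ p ih => exact disjoint_infectStep G hW ih

theorem not_isHullSet_of_disjoint_infectIter (hWne : W.Nonempty) {S : Set V}
    (hS : ∀ p, Disjoint (infectIter G S p) W) : ¬ IsHullSet G S := by
  rintro ⟨p, hp⟩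
  obtain ⟨w, hw⟩ := hWne
  exact Set.disjoint_left.mp (hS p) (hp ▸ Set.mem_univ w) hw

theorem subsingleton_adj_not_mem_of_isCubic (hcub : IsCubic G) {w : V}
    (hw : ({x ∈ W | G.Adj w x}).ncard = 2) : {x | G.Adj w x ∧ x ∉ W}.Subsingleton := by
  have hfin : {x | G.Adj w x}.Finite := Set.finite_of_ncard_ne_zero (by simp [hcub w])
  have hdiff : {x | G.Adj w x} \ {x ∈ W | G.Adj w x} = {x | G.Adj w x ∧ x ∉ W} := by
    ext x
    simp only [Set.mem_sdiff, Set.mem_ofPred_eq, not_and]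
    tauto
  have hone : {x | G.Adj w x ∧ x ∉ W}.ncard = 1 := by
    rw [← hdiff, Set.ncard_sdiff' (fun x hx => hx.2) hfin, hcub w, hw]
  obtain ⟨c, hc⟩ := Set.ncard_eq_one.mp hone
  exact hc ▸ Set.subsingleton_singleton

end Infection

theorem stmt3_general {V : Type*} (G : SimpleGraph V)
    (hcub : IsCubic G) (W : Set V) (hWne : W.Nonempty)
    (hWcyc : ∀ w ∈ W, ({x ∈ W | G.Adj w x}).ncard = 2)
    (S : Set V) (hdis : Disjoint S W) :
    (∀ p : ℕ, Disjoint (infectIter G S p) W) ∧ ¬ IsHullSet G S := by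
  have hW : ∀ w ∈ W, {x | G.Adj w x ∧ x ∉ W}.Subsingleton := fun w hw =>
    subsingleton_adj_not_mem_of_isCubic G hcub (hWcyc w hw)
  have hinf := disjoint_infectIter G hW hdis
  exact ⟨hinf, not_isHullSet_of_disjoint_infectIter G hWne hinf⟩

theorem stmt3 {V : Type*} [Fintype V] (G : SimpleGraph V)
    (hcub : IsCubic G) (W : Set V) (hWne : W.Nonempty)
    (hWcyc : ∀ w ∈ W, ({x ∈ W | G.Adj w x}).ncard = 2)
    (S : Set V) (hdis : Disjoint S W) :
    (∀ p : ℕ, Disjoint (infectIter G S p) W) ∧ ¬ IsHullSet G S :=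
  stmt3_general G hcub W hWne hWcyc S hdis
end

section
/- Let G = GGP(n,σ) where σ is a product of disjoint cycles of length ≥ 3 and all cycles of σ have even length. Then the Betti deficiency of G is at most 1; explicitly, the spanning tree consisting of all exterior edges u_i u_{i+1} except u_0 u_1 together with all spoke edges u_i v_i has a co-tree whose components are the interior cycles (all even) and the single edge u_0 u_1. -/
/-!
In the co-tree of `theTree` no edge joins an exterior vertex to an interior one. On the exterior
side only `u₀ u₁` is left (a genuine edge since `n ≥ 3`), so it spans the unique odd component
and every other `uᵢ` is isolated. The component of `vᵢ` is the interior cycle through `i`: it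
carries one edge `v_a v_{σ a}` for each `a` in the support of the cycle of `σ` through `i`, and
these edges are distinct because `σ` has no 2-cycles, so their number is the even length of that
cycle (or `0` when `σ` fixes `i`).
-/

open SimpleGraph

def GGP (n : ℕ) [NeZero n] (σ : Equiv.Perm (Fin n)) : SimpleGraph (Fin n ⊕ Fin n) :=
  SimpleGraph.fromRel fun x y =>
    match x, y with
    | Sum.inl i, Sum.inl j => j = i + 1
    | Sum.inl i, Sum.inr j => i = j
    | Sum.inr i, Sum.inr j => j = σ i
    | _, _ => False

noncomputable def cotreeOddComponents {V : Type*} (H : SimpleGraph V) : ℕ :=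
  Nat.card {c : H.ConnectedComponent //
    Odd ({e ∈ H.edgeSet | ∀ v ∈ e, v ∈ c.supp}).ncard}

noncomputable def bettiDeficiency {V : Type*} (G : SimpleGraph V) : ℕ :=
  sInf {m | ∃ T : SimpleGraph V, T ≤ G ∧ T.IsTree ∧
    m = cotreeOddComponents (G \ T)}

def theTree (n : ℕ) [NeZero n] : SimpleGraph (Fin n ⊕ Fin n) :=
  SimpleGraph.fromRel fun x y =>
    match x, y with
    | Sum.inl i, Sum.inl j => j = i + 1 ∧ i ≠ 0
    | Sum.inl i, Sum.inr j => i = j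
    | _, _ => False

namespace SimpleGraph

variable {V : Type*} {G : SimpleGraph V}

theorem Reachable.mem_of_adj_closed {S : Set V} (hS : ∀ x y, x ∈ S → G.Adj x y → y ∈ S)
    {a b : V} (h : G.Reachable a b) (ha : a ∈ S) : b ∈ S := by
  obtain ⟨w⟩ := h
  induction w with
  | nil => exact ha
  | cons hadj _ ih => exact ih (hS _ _ ha hadj)

/-- On a cycle, a vertex of maximal rank has two neighbours, but both would be its parent. -/
theorem isAcyclic_of_parent (p : V → V) (f : V → ℕ)
    (hpar : ∀ x y, G.Adj x y → f x ≤ f y → x = p y) : G.IsAcyclic := by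
  intro v c hc
  classical
  obtain ⟨u, hu, hmax⟩ := c.support.toFinset.exists_max_image f ⟨v, by simp⟩
  rw [List.mem_toFinset] at hu
  have hsub : c.toSubgraph.neighborSet u ⊆ {p u} := fun w hw =>
    hpar w u (c.toSubgraph.adj_sub hw).symm
      (hmax w (List.mem_toFinset.2 ((c.mem_verts_toSubgraph).1 hw.snd_mem)))
  have htwo := hc.ncard_neighborSet_toSubgraph_eq_two hu
  have hle := Set.ncard_le_ncard hsub
  rw [htwo, Set.ncard_singleton] at hle
  omega

theorem reachable_of_parent (r : V) (p : V → V) (f : V → ℕ)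
    (hadj : ∀ x, x ≠ r → G.Adj x (p x)) (hlt : ∀ x, x ≠ r → f (p x) < f x) (x : V) :
    G.Reachable x r := by
  induction hfx : f x using Nat.strong_induction_on generalizing x with
  | _ k ih =>
    by_cases hx : x = r
    · exact hx ▸ Reachable.refl x
    · exact (hadj x hx).reachable.trans (ih _ (hfx ▸ hlt x hx) _ rfl)

theorem isTree_of_parent (r : V) (p : V → V) (f : V → ℕ)
    (hadj : ∀ x, x ≠ r → G.Adj x (p x)) (hlt : ∀ x, x ≠ r → f (p x) < f x)
    (hpar : ∀ x y, G.Adj x y → f x ≤ f y → x = p y) : G.IsTree :=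
  ⟨G.connected_iff_exists_forall_reachable.2
      ⟨r, fun x => (reachable_of_parent r p f hadj hlt x).symm⟩,
    isAcyclic_of_parent p f hpar⟩

end SimpleGraph

open Finset Sum

theorem theTree_le_GGP {n : ℕ} [NeZero n] (σ : Equiv.Perm (Fin n)) : theTree n ≤ GGP n σ := by
  rintro (i | i) (j | j) h <;> simp [theTree, GGP, fromRel_adj] at h ⊢ <;> tauto

/-- `theTree` is the path `u₁ u₂ ⋯ u_{n-1} u₀` with the spokes attached, rooted at `u₁`:
`uᵢ` has parent `uᵢ₋₁` and rank `i - 1 (mod n)`, and every `vᵢ` hangs from `uᵢ`. -/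
theorem theTree_isTree (n : ℕ) [NeZero n] : (theTree n).IsTree := by
  obtain ⟨m, rfl⟩ := Nat.exists_eq_succ_of_ne_zero (NeZero.ne n)
  have hlt : ∀ i : Fin (m + 1), i ≠ 0 → i - 1 < i := fun i hi =>
    Fin.sub_one_lt_iff.2 (Fin.pos_iff_ne_zero.2 hi)
  refine isTree_of_parent (inl 1) (Sum.elim (fun i => inl (i - 1)) inl)
    (Sum.elim (fun i => (i - 1).val) fun _ => m + 1) ?_ ?_ ?_
  · rintro (i | i) hi
    · have hi1 : i ≠ 1 := fun h => hi (h ▸ rfl)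
      have hloop : i ≠ i - 1 := fun h => by
        have := Fin.one_eq_zero_iff.1 (sub_eq_self.1 h.symm)
        obtain rfl : m = 0 := by omega
        exact hi1 (Subsingleton.elim _ _)
      simp [theTree, fromRel_adj, sub_ne_zero.2 hi1, hloop]
    · simp [theTree, fromRel_adj]
  · rintro (i | i) hi
    · exact hlt _ (sub_ne_zero.2 fun h => hi (h ▸ rfl))
    · exact (i - 1).isLt
  · rintro (i | i) (j | j) h hf
    · simp only [theTree, fromRel_adj, ne_eq, inl.injEq] at h
      obtain ⟨-, ⟨rfl, -⟩ | ⟨rfl, hj⟩⟩ := h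
      · simp
      · exact absurd hf (not_le.2 (by simpa using hlt j hj))
    · obtain rfl : i = j := by simpa [theTree, fromRel_adj] using h
      rfl
    · exact absurd hf (not_le.2 (j - 1).isLt)
    · simp [theTree, fromRel_adj] at h

namespace Equiv.Perm

variable {α : Type*} [Fintype α] [DecidableEq α] {σ : Perm α}

theorem mem_support_cycleOf_iff_sameCycle {x y : α} :
    y ∈ (σ.cycleOf x).support ↔ σ.SameCycle x y ∧ σ y ≠ y :=
  mem_support_cycleOf_iff.trans (and_congr_right fun h => h.mem_support_iff.trans mem_support)

theorem card_support_cycleOf_mem_cycleType {x : α} (hx : σ x ≠ x) :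
    #(σ.cycleOf x).support ∈ σ.cycleType := by
  rw [cycleType_def, Multiset.mem_map]
  exact ⟨_, cycleOf_mem_cycleFactorsFinset_iff.2 (mem_support.2 hx), rfl⟩

theorem even_card_support_cycleOf (heven : ∀ c ∈ σ.cycleType, Even c) (x : α) :
    Even #(σ.cycleOf x).support := by
  by_cases hx : σ x = x
  · simp [(cycleOf_eq_one_iff σ).2 hx]
  · exact heven _ (card_support_cycleOf_mem_cycleType hx)

theorem apply_apply_ne_self (hlen : ∀ c ∈ σ.cycleType, 3 ≤ c) {x : α} (hx : σ x ≠ x) :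
    σ (σ x) ≠ x := by
  intro h
  have hc := σ.isCycle_cycleOf hx
  have hsq : σ.cycleOf x ^ 2 = 1 := hc.pow_eq_one_iff.2
    ⟨x, by rwa [cycleOf_apply_self], by rwa [cycleOf_pow_apply_self, pow_two, mul_apply]⟩
  have hle : #(σ.cycleOf x).support ≤ 2 := hc.orderOf ▸ orderOf_le_of_pow_eq_one two_pos hsq
  have := hlen _ (card_support_cycleOf_mem_cycleType hx)
  omega

end Equiv.Perm

abbrev cotree (n : ℕ) [NeZero n] (σ : Equiv.Perm (Fin n)) : SimpleGraph (Fin n ⊕ Fin n) :=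
  GGP n σ \ theTree n

section Cotree

variable {n : ℕ} [NeZero n] {σ : Equiv.Perm (Fin n)}

theorem cotree_adj_inl_zero_one (hn : 3 ≤ n) : (cotree n σ).Adj (inl 0) (inl 1) := by
  obtain ⟨m, rfl⟩ : ∃ m, n = m + 3 := ⟨n - 3, by omega⟩
  have h02 : (0 : Fin (m + 3)) ≠ 1 + 1 := by
    simp [Fin.ext_iff, Fin.val_add, Nat.mod_eq_of_lt (show 2 < m + 3 by omega)]
  simpa [GGP, theTree, fromRel_adj] using h02

theorem cotree_edge_eq_of_adj_inl {i j : Fin n} (h : (cotree n σ).Adj (inl i) (inl j)) :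
    s(inl i, inl j) = (s(inl 0, inl 1) : Sym2 (Fin n ⊕ Fin n)) := by
  simp only [GGP, theTree, sdiff_adj, fromRel_adj, ne_eq, inl.injEq, not_and, not_or,
    Decidable.not_not] at h
  obtain ⟨⟨hne, rfl | rfl⟩, htree⟩ := h
  · obtain rfl := (htree hne).1 rfl
    simp
  · obtain rfl := (htree hne).2 rfl
    simp [Sym2.eq_swap]

theorem not_cotree_adj_inl_inr (i j : Fin n) : ¬ (cotree n σ).Adj (inl i) (inr j) := by
  simp [GGP, theTree, fromRel_adj]

theorem cotree_adj_inr_inr {i j : Fin n} :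
    (cotree n σ).Adj (inr i) (inr j) ↔ i ≠ j ∧ (j = σ i ∨ i = σ j) := by
  simp [GGP, theTree, fromRel_adj]

theorem isLeft_of_cotree_reachable_inl {i : Fin n} {x : Fin n ⊕ Fin n}
    (h : (cotree n σ).Reachable (inl i) x) : x.isLeft := by
  refine h.mem_of_adj_closed (S := {x : Fin n ⊕ Fin n | x.isLeft}) ?_ rfl
  rintro (a | a) (b | b) ha hab
  · rfl
  · exact absurd hab (not_cotree_adj_inl_inr a b)
  all_goals simp at ha

theorem cotree_reachable_inr_apply (a : Fin n) :
    (cotree n σ).Reachable (inr a) (inr (σ a)) := by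
  by_cases ha : σ a = a
  · rw [ha]
  · exact (cotree_adj_inr_inr.2 ⟨Ne.symm ha, Or.inl rfl⟩).reachable

theorem cotree_reachable_inr_iff {i : Fin n} {x : Fin n ⊕ Fin n} :
    (cotree n σ).Reachable (inr i) x ↔ ∃ j, x = inr j ∧ σ.SameCycle i j := by
  constructor
  · intro h
    refine h.mem_of_adj_closed (S := {x | ∃ j, x = inr j ∧ σ.SameCycle i j}) ?_
      ⟨i, rfl, .refl σ i⟩
    rintro _ (b | b) ⟨a, rfl, ha⟩ hab
    · exact absurd hab.symm (not_cotree_adj_inl_inr b a)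
    · obtain ⟨-, rfl | rfl⟩ := cotree_adj_inr_inr.1 hab
      · exact ⟨_, rfl, Equiv.Perm.sameCycle_apply_right.2 ha⟩
      · exact ⟨b, rfl, Equiv.Perm.sameCycle_apply_right.1 ha⟩
  · rintro ⟨j, rfl, hij⟩
    obtain ⟨k, -, rfl⟩ := hij.exists_pow_eq'
    clear hij
    induction k with
    | zero => rfl
    | succ k ih =>
      exact ih.trans (by rw [pow_succ', Equiv.Perm.mul_apply]; exact cotree_reachable_inr_apply _)

theorem cotree_componentEdge_inl_eq {i : Fin n} {e : Sym2 (Fin n ⊕ Fin n)}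
    (he : e ∈ (cotree n σ).edgeSet)
    (hsupp : ∀ v ∈ e, v ∈ ((cotree n σ).connectedComponentMk (inl i)).supp) :
    e = s(inl 0, inl 1) := by
  induction e using Sym2.ind with
  | _ x y =>
    have hx := hsupp x (Sym2.mem_mk_left x y)
    have hy := hsupp y (Sym2.mem_mk_right x y)
    rw [ConnectedComponent.mem_supp_iff, ConnectedComponent.eq] at hx hy
    obtain ⟨a, rfl⟩ := isLeft_iff.1 (isLeft_of_cotree_reachable_inl hx.symm)
    obtain ⟨b, rfl⟩ := isLeft_iff.1 (isLeft_of_cotree_reachable_inl hy.symm)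
    exact cotree_edge_eq_of_adj_inl he

theorem cotree_componentEdges_inl_zero (hn : 3 ≤ n) :
    {e ∈ (cotree n σ).edgeSet |
      ∀ v ∈ e, v ∈ ((cotree n σ).connectedComponentMk (inl 0)).supp} =
      {s(inl 0, inl 1)} := by
  ext e
  constructor
  · exact fun ⟨he, hsupp⟩ => cotree_componentEdge_inl_eq he hsupp
  · rintro rfl
    refine ⟨cotree_adj_inl_zero_one hn, fun v hv => ?_⟩
    rw [ConnectedComponent.mem_supp_iff, ConnectedComponent.eq]
    rcases Sym2.mem_iff.1 hv with rfl | rfl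
    · rfl
    · exact (cotree_adj_inl_zero_one hn).symm.reachable

theorem cotree_componentEdges_inr (i : Fin n) :
    {e ∈ (cotree n σ).edgeSet |
      ∀ v ∈ e, v ∈ ((cotree n σ).connectedComponentMk (inr i)).supp} =
      (fun a => s(inr a, inr (σ a))) '' (σ.cycleOf i).support := by
  have hsupp (x : Fin n ⊕ Fin n) :
      x ∈ ((cotree n σ).connectedComponentMk (inr i)).supp ↔
        ∃ j, x = inr j ∧ σ.SameCycle i j := by
    rw [ConnectedComponent.mem_supp_iff, ConnectedComponent.eq, reachable_comm,
      cotree_reachable_inr_iff]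
  ext e
  simp only [Set.mem_ofPred_eq, Set.mem_image, Finset.mem_coe,
    Equiv.Perm.mem_support_cycleOf_iff_sameCycle]
  constructor
  · induction e using Sym2.ind with
    | _ x y =>
      rintro ⟨hadj, hxy⟩
      obtain ⟨a, rfl, ha⟩ := (hsupp x).1 (hxy x (Sym2.mem_mk_left x y))
      obtain ⟨b, rfl, hb⟩ := (hsupp y).1 (hxy y (Sym2.mem_mk_right _ y))
      obtain ⟨hab, rfl | rfl⟩ := cotree_adj_inr_inr.1 hadj
      · exact ⟨a, ⟨ha, Ne.symm hab⟩, rfl⟩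
      · exact ⟨b, ⟨hb, hab⟩, Sym2.eq_swap⟩
  · rintro ⟨a, ⟨ha, hσa⟩, rfl⟩
    refine ⟨cotree_adj_inr_inr.2 ⟨Ne.symm hσa, Or.inl rfl⟩, fun v hv => ?_⟩
    rcases Sym2.mem_iff.1 hv with rfl | rfl
    · exact (hsupp _).2 ⟨a, rfl, ha⟩
    · exact (hsupp _).2 ⟨σ a, rfl, Equiv.Perm.sameCycle_apply_right.2 ha⟩

theorem even_ncard_cotree_componentEdges_inr (hlen : ∀ c ∈ σ.cycleType, 3 ≤ c)
    (heven : ∀ c ∈ σ.cycleType, Even c) (i : Fin n) :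
    Even {e ∈ (cotree n σ).edgeSet |
      ∀ v ∈ e, v ∈ ((cotree n σ).connectedComponentMk (inr i)).supp}.ncard := by
  have hinj : Set.InjOn (fun a => (s(inr a, inr (σ a)) : Sym2 (Fin n ⊕ Fin n)))
      (σ.cycleOf i).support := by
    intro a _ b hb hab
    rcases Sym2.eq_iff.1 hab with ⟨h, -⟩ | ⟨h₁, h₂⟩
    · exact inr_injective h
    · have hσb := (Equiv.Perm.mem_support_cycleOf_iff_sameCycle.1 hb).2
      exact absurd (by rw [← inr_injective h₁]; exact inr_injective h₂)
        (Equiv.Perm.apply_apply_ne_self hlen hσb)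
  rw [cotree_componentEdges_inr, hinj.ncard_image, Set.ncard_coe_finset]
  exact σ.even_card_support_cycleOf heven i

theorem eq_connectedComponentMk_inl_zero_of_odd (hlen : ∀ c ∈ σ.cycleType, 3 ≤ c)
    (heven : ∀ c ∈ σ.cycleType, Even c) {c : (cotree n σ).ConnectedComponent}
    (hc : Odd {e ∈ (cotree n σ).edgeSet | ∀ v ∈ e, v ∈ c.supp}.ncard) :
    c = (cotree n σ).connectedComponentMk (inl 0) := by
  induction c using ConnectedComponent.ind with
  | _ x =>
    rcases x with i | i
    · obtain ⟨e, he, hsupp⟩ := Set.nonempty_of_ncard_ne_zero hc.pos.ne'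
      obtain rfl := cotree_componentEdge_inl_eq he hsupp
      exact ((ConnectedComponent.mem_supp_iff _ _).1 (hsupp _ (Sym2.mem_mk_left _ _))).symm
    · exact absurd hc (Nat.not_odd_iff_even.2 (even_ncard_cotree_componentEdges_inr hlen heven i))

theorem cotreeOddComponents_cotree (hn : 3 ≤ n) (hlen : ∀ c ∈ σ.cycleType, 3 ≤ c)
    (heven : ∀ c ∈ σ.cycleType, Even c) : cotreeOddComponents (cotree n σ) = 1 := by
  rw [cotreeOddComponents, Nat.card_eq_one_iff_exists]
  refine ⟨⟨(cotree n σ).connectedComponentMk (inl 0), ?_⟩,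
    fun ⟨c, hc⟩ => Subtype.ext (eq_connectedComponentMk_inl_zero_of_odd hlen heven hc)⟩
  rw [cotree_componentEdges_inl_zero hn, Set.ncard_singleton]
  exact odd_one

end Cotree

theorem stmt18_general (n : ℕ) [NeZero n] (hn : 3 ≤ n) (σ : Equiv.Perm (Fin n))
    (hlen : ∀ c ∈ σ.cycleType, 3 ≤ c)
    (heven : ∀ c ∈ σ.cycleType, Even c) :
    bettiDeficiency (GGP n σ) ≤ 1 ∧
    (theTree n ≤ GGP n σ ∧ (theTree n).IsTree) ∧
    cotreeOddComponents (GGP n σ \ theTree n) = 1 := by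
  have hodd : cotreeOddComponents (GGP n σ \ theTree n) = 1 :=
    cotreeOddComponents_cotree hn hlen heven
  exact ⟨Nat.sInf_le ⟨theTree n, theTree_le_GGP σ, theTree_isTree n, hodd.symm⟩,
    ⟨theTree_le_GGP σ, theTree_isTree n⟩, hodd⟩

theorem stmt18 (n : ℕ) [NeZero n] (hn : 3 ≤ n) (σ : Equiv.Perm (Fin n))
    (hσ : σ ≠ 1) (hfix : ∀ i, σ i ≠ i)
    (hlen : ∀ c ∈ σ.cycleType, 3 ≤ c)
    (heven : ∀ c ∈ σ.cycleType, Even c) :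
    bettiDeficiency (GGP n σ) ≤ 1 ∧
    (theTree n ≤ GGP n σ ∧ (theTree n).IsTree) ∧
    cotreeOddComponents (GGP n σ \ theTree n) = 1 :=
  stmt18_general n hn σ hlen heven
end
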